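/- arXiv:1207.3019 — 4 statements merged into one kernel-verified Lean document; each statement's English description precedes it below -/
import Mathlib

section
/- Let x* ∈ X satisfy f(x*) = 0. Then for every y ∈ X and every n×n real matrix Y, one has x* ∈ K(y, X). -/
/-!
Along the segment from `x*` to `y`, the fundamental theorem of calculus gives
`f y - f x* = A (y - x*)`, where `A` is the average of the Jacobian over the segment. In finite
dimension the convex hull of the compact set of Jacobians met on the segment is compact, so it
contains the average, and it lies in the convex set `M`. Choosing `x = x*` in the Krawczyk
expression and using `f x* = 0`, the expression collapses to `x*`.
-/

open MeasureTheory Set AffineMap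
open scoped Convex Matrix

theorem IsCompact.convexHull {E : Type*} [NormedAddCommGroup E] [NormedSpace ℝ E]
    [FiniteDimensional ℝ E] {K : Set E} (hK : IsCompact K) :
    IsCompact (convexHull ℝ K) := by
  let combination (k : ℕ) (q : (Fin k → ℝ) × (Fin k → E)) : E := ∑ i, q.1 i • q.2 i
  let combinations (k : ℕ) : Set E :=
    combination k '' (stdSimplex ℝ (Fin k) ×ˢ univ.pi fun _ => K)
  -- By Carathéodory, `finrank ℝ E + 1` points suffice.
  suffices _root_.convexHull ℝ K = ⋃ k ∈ Iic (Module.finrank ℝ E + 1), combinations k by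
    rw [this]
    refine (finite_Iic _).isCompact_biUnion fun k _ => ?_
    exact ((isCompact_stdSimplex ℝ _).prod (isCompact_univ_pi fun _ => hK)).image
      (by fun_prop)
  refine Subset.antisymm (fun x hx => ?_) (iUnion₂_subset fun k _ => ?_)
  · obtain ⟨ι, _, z, w, hzK, hz, hw₀, hw₁, rfl⟩ := eq_pos_convex_span_of_mem_convexHull hx
    have hcard : Fintype.card ι ≤ Module.finrank ℝ E + 1 :=
      hz.card_le_finrank_succ.trans (by grw [Submodule.finrank_le])
    let e := (Fintype.equivFin ι).symm
    refine mem_biUnion hcard ⟨(w ∘ e, z ∘ e), ⟨⟨fun i => (hw₀ _).le, ?_⟩, ?_⟩, ?_⟩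
    · simpa [e.sum_comp] using hw₁
    · exact fun i _ => hzK (mem_range_self _)
    · exact e.sum_comp fun i => w i • z i
  · rintro _ ⟨⟨w, z⟩, ⟨hw, hz⟩, rfl⟩
    exact (convex_convexHull ℝ K).sum_mem (fun i _ => hw.1 i) hw.2
      fun i _ => subset_convexHull ℝ K (hz i (mem_univ i))

theorem Convex.integral_mem_of_ae_mem_isCompact {α E : Type*} [MeasurableSpace α]
    [NormedAddCommGroup E] [NormedSpace ℝ E] [FiniteDimensional ℝ E] {μ : Measure α}
    [IsProbabilityMeasure μ] {s K : Set E} {g : α → E} (hs : Convex ℝ s) (hK : IsCompact K)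
    (hKs : K ⊆ s) (hg : ∀ᵐ x ∂μ, g x ∈ K) (hgi : Integrable g μ) : ∫ x, g x ∂μ ∈ s :=
  convexHull_min hKs hs <| (convex_convexHull ℝ K).integral_mem hK.convexHull.isClosed
    (hg.mono fun _ hx => subset_convexHull ℝ K hx) hgi

section Segment

variable {E F : Type*} [NormedAddCommGroup E] [NormedSpace ℝ E] [NormedAddCommGroup F]
  [NormedSpace ℝ F] {f : E → F} {f' : E → E →L[ℝ] F} {x y : E}

theorem ContinuousOn.comp_lineMap {α : Type*} [TopologicalSpace α] {g : E → α}
    (hg : ContinuousOn g [x -[ℝ] y]) :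
    ContinuousOn (fun t => g (AffineMap.lineMap x y t)) (Icc (0 : ℝ) 1) :=
  hg.comp (by fun_prop : Continuous (AffineMap.lineMap x y : ℝ → E)).continuousOn
    fun _ => lineMap_mem_segment ℝ x y

theorem sub_eq_integral_lineMap_apply [CompleteSpace F]
    (hf : ∀ z ∈ [x -[ℝ] y], HasFDerivAt f (f' z) z) (hf' : ContinuousOn f' [x -[ℝ] y]) :
    f y - f x = (∫ t in (0 : ℝ)..1, f' (lineMap x y t)) (y - x) := by
  have hint := hf'.comp_lineMap.intervalIntegrable_of_Icc (μ := volume) zero_le_one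
  rw [ContinuousLinearMap.intervalIntegral_apply hint]
  have hderiv : ∀ t ∈ uIcc (0 : ℝ) 1,
      HasDerivAt (f ∘ lineMap x y) (f' (lineMap x y t) (y - x)) t := fun t ht =>
    (hf _ (lineMap_mem_segment ℝ x y (by rwa [uIcc_of_le zero_le_one] at ht))).comp_hasDerivAt t
      hasDerivAt_lineMap
  have hint' : IntervalIntegrable (fun t => f' (lineMap x y t) (y - x)) volume 0 1 :=
    (ContinuousOn.clm_apply hf'.comp_lineMap continuousOn_const).intervalIntegrable_of_Icc
      zero_le_one
  simpa using (intervalIntegral.integral_eq_sub_of_hasDerivAt hderiv hint').symm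

theorem Convex.exists_mem_sub_eq_apply_of_hasFDerivAt [FiniteDimensional ℝ E]
    [FiniteDimensional ℝ F] {s : Set (E →L[ℝ] F)} (hs : Convex ℝ s)
    (hf : ∀ z ∈ [x -[ℝ] y], HasFDerivAt f (f' z) z) (hf' : ContinuousOn f' [x -[ℝ] y])
    (hf's : MapsTo f' [x -[ℝ] y] s) : ∃ L ∈ s, f y - f x = L (y - x) := by
  refine ⟨_, ?_, sub_eq_integral_lineMap_apply hf hf'⟩
  have : IsProbabilityMeasure (volume.restrict (Ioc (0 : ℝ) 1)) := ⟨by simp⟩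
  rw [intervalIntegral.integral_of_le zero_le_one]
  refine hs.integral_mem_of_ae_mem_isCompact (isCompact_Icc.image_of_continuousOn
    hf'.comp_lineMap) (image_subset_iff.2 fun t ht => hf's (lineMap_mem_segment ℝ x y ht)) ?_ ?_
  · filter_upwards [ae_restrict_mem measurableSet_Ioc] with t ht
    exact mem_image_of_mem _ (Ioc_subset_Icc_self ht)
  · exact hf'.comp_lineMap.integrableOn_Icc.mono_set Ioc_subset_Icc_self

end Segment

theorem Matrix.eq_sub_mulVec_add_one_sub_mul_mulVec {n R : Type*} [Fintype n] [DecidableEq n]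
    [CommRing R] {A Y : Matrix n n R} {x y u : n → R} (h : A *ᵥ (y - x) = u) :
    x = y - Y *ᵥ u + (1 - Y * A) *ᵥ (x - y) := by
  rw [sub_mulVec, one_mulVec, ← mulVec_mulVec, ← neg_sub y x, mulVec_neg, h, mulVec_neg]
  abel

theorem krawczyk_contains_root_general (n : ℕ)
    (D : Set (Fin n → ℝ))
    (f : (Fin n → ℝ) → (Fin n → ℝ))
    (J : (Fin n → ℝ) → Matrix (Fin n) (Fin n) ℝ)
    (hf : ∀ z ∈ D, HasFDerivAt f (LinearMap.toContinuousLinearMap (Matrix.mulVecLin (J z))) z)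
    (hJc : ContinuousOn J D)
    (a b : Fin n → ℝ)
    (X : Set (Fin n → ℝ)) (hX : X = Set.Icc a b) (hXD : X ⊆ D)
    (M : Set (Matrix (Fin n) (Fin n) ℝ)) (hM : Convex ℝ M)
    (hJM : ∀ z ∈ X, J z ∈ M)
    (xstar : Fin n → ℝ) (hxstar : xstar ∈ X) (hfstar : f xstar = 0)
    (y : Fin n → ℝ) (hy : y ∈ X)
    (Y : Matrix (Fin n) (Fin n) ℝ) :
    xstar ∈ { w | ∃ A ∈ M, ∃ x ∈ X,
      w = y - Y.mulVec (f y) + (1 - Y * A).mulVec (x - y) } := by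
  let e : Matrix (Fin n) (Fin n) ℝ ≃ₗ[ℝ] (Fin n → ℝ) →L[ℝ] (Fin n → ℝ) :=
    Matrix.toLin'.trans LinearMap.toContinuousLinearMap
  have hseg : [xstar -[ℝ] y] ⊆ X := (hX ▸ convex_Icc a b : Convex ℝ X).segment_subset hxstar hy
  obtain ⟨_, ⟨A, hAM, rfl⟩, hA⟩ :=
    (hM.linear_image e.toLinearMap).exists_mem_sub_eq_apply_of_hasFDerivAt
      (fun z hz => hf z (hXD (hseg hz)))
      (e.toContinuousLinearEquiv.continuous.comp_continuousOn (hJc.mono (hseg.trans hXD)))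
      (fun z hz => mem_image_of_mem _ (hJM z (hseg hz)))
  refine ⟨A, hAM, xstar, hxstar, Matrix.eq_sub_mulVec_add_one_sub_mul_mulVec ?_⟩
  simpa [e, hfstar] using hA.symm

/-- Krawczyk operator, Property 1: any zero `x*` of `f` in the box `X` belongs to
`K(y, X)` for every `y ∈ X` and every real `n × n` matrix `Y`. -/
theorem krawczyk_contains_root (n : ℕ) (hn : 1 ≤ n)
    (D : Set (Fin n → ℝ)) (hD : IsOpen D)
    (f : (Fin n → ℝ) → (Fin n → ℝ))
    (J : (Fin n → ℝ) → Matrix (Fin n) (Fin n) ℝ)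
    (hf : ∀ z ∈ D, HasFDerivAt f (LinearMap.toContinuousLinearMap (Matrix.mulVecLin (J z))) z)
    (hJc : ContinuousOn J D)
    (a b : Fin n → ℝ) (hab : a ≤ b)
    (X : Set (Fin n → ℝ)) (hX : X = Set.Icc a b) (hXD : X ⊆ D)
    (M : Set (Matrix (Fin n) (Fin n) ℝ)) (hM : Convex ℝ M)
    (hJM : ∀ z ∈ X, J z ∈ M)
    (xstar : Fin n → ℝ) (hxstar : xstar ∈ X) (hfstar : f xstar = 0)
    (y : Fin n → ℝ) (hy : y ∈ X)
    (Y : Matrix (Fin n) (Fin n) ℝ) :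
    xstar ∈ { w | ∃ A ∈ M, ∃ x ∈ X,
      w = y - Y.mulVec (f y) + (1 - Y * A).mulVec (x - y) } :=
  krawczyk_contains_root_general n D f J hf hJc a b X hX hXD M hM hJM xstar hxstar hfstar y hy Y
end

section
/- If there exist y ∈ X and an invertible n×n real matrix Y such that K(y, X) ⊆ X, then f has a zero in X, i.e., there exists x* ∈ X with f(x*) = 0. -/
/-!
With `g x = x - Y *ᵥ f x`, the zeros of `f` are the fixed points of `g` (`Y` is invertible).
Along the segment from `x₂` to `x₁` we have
`g x₁ - g x₂ = ∫₀¹ (1 - Y * J (x₂ + t • (x₁ - x₂))) *ᵥ (x₁ - x₂) dt`, so `g x` is an average of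
points of `K(y, X)`; as the box `X` is closed and convex, `g` maps `X` into itself. Testing the
inclusion `K(y, X) ⊆ X` at the corners of `X` bounds the weighted row sums
`∑ⱼ |Bᵢⱼ| (bⱼ - aⱼ) ≤ bᵢ - aᵢ` of `B = 1 - Y * J z`, which makes `g` nonexpansive for the norm
`maxᵢ |uᵢ| / (bᵢ - aᵢ)`. A nonexpansive self-map of a compact convex set has a fixed point, since
the contractions `t • y + (1 - t) • g` provide almost fixed points as `t → 0`.
-/

open Set Filter Topology Matrix MeasureTheory

section FixedPoint

variable {E : Type*} [NormedAddCommGroup E] [NormedSpace ℝ E] {p : Seminorm ℝ E} {K : Set E}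
  {g : E → E}

theorem exists_seminorm_sub_eq_zero_of_contracting (hp : Continuous p) (hK : IsCompact K)
    (hne : K.Nonempty) (hg : ContinuousOn g K) (hgK : MapsTo g K K) {q : ℝ} (hq : q < 1)
    (hgp : ∀ x ∈ K, ∀ x' ∈ K, p (g x - g x') ≤ q * p (x - x')) :
    ∃ z ∈ K, p (z - g z) = 0 := by
  obtain ⟨z, hz, hmin⟩ :=
    hK.exists_isMinOn hne (hp.comp_continuousOn (continuousOn_id.sub hg))
  refine ⟨z, hz, le_antisymm ?_ (apply_nonneg p _)⟩
  have hstep : p (z - g z) ≤ q * p (z - g z) :=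
    (hmin (hgK hz)).trans (hgp z hz (g z) (hgK hz))
  nlinarith [apply_nonneg p (z - g z)]

theorem exists_seminorm_sub_eq_zero_of_nonexpansive (hp : Continuous p) (hK : IsCompact K)
    (hKc : Convex ℝ K) (hne : K.Nonempty) (hg : ContinuousOn g K) (hgK : MapsTo g K K)
    (hgp : ∀ x ∈ K, ∀ x' ∈ K, p (g x - g x') ≤ p (x - x')) :
    ∃ x ∈ K, p (x - g x) = 0 := by
  obtain ⟨y, hy⟩ := hne
  obtain ⟨x, hx, hmin⟩ :=
    hK.exists_isMinOn ⟨y, hy⟩ (hp.comp_continuousOn (continuousOn_id.sub hg))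
  have hyg : ContinuousOn (fun x => p (y - g x)) K :=
    hp.comp_continuousOn (continuousOn_const.sub hg)
  obtain ⟨C, hC⟩ := (hK.image_of_continuousOn hyg).bddAbove
  -- An almost fixed point `z` of the contraction `t • y + (1 - t) • g` has
  -- `z - g z ≈ t • (y - g z)`, which is small for small `t`.
  have happrox : ∀ t ∈ Ioo (0 : ℝ) 1, p (x - g x) ≤ t * C := by
    rintro t ⟨ht0, ht1⟩
    set gt : E → E := fun x => t • y + (1 - t) • g x
    obtain ⟨z, hz, hz0⟩ := exists_seminorm_sub_eq_zero_of_contracting hp hK ⟨y, hy⟩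
      (g := gt) (continuousOn_const.add (hg.const_smul _))
      (fun x hx => hKc hy (hgK hx) ht0.le (by linarith) (by ring)) (q := 1 - t) (by linarith)
      (fun x₁ _ x₂ _ => by
        rw [show gt x₁ - gt x₂ = (1 - t) • (g x₁ - g x₂) by simp only [gt]; module,
          map_smul_eq_mul, Real.norm_of_nonneg (by linarith)]
        exact mul_le_mul_of_nonneg_left (hgp _ ‹_› _ ‹_›) (by linarith))
    calc p (x - g x) ≤ p (z - g z) := hmin hz
      _ = p ((z - gt z) + t • (y - g z)) := by congr 1; simp only [gt]; module
      _ ≤ p (z - gt z) + p (t • (y - g z)) := map_add_le_add p _ _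
      _ ≤ t * C := by
        rw [hz0, zero_add, map_smul_eq_mul, Real.norm_of_nonneg ht0.le]
        exact mul_le_mul_of_nonneg_left (hC ⟨z, hz, rfl⟩) ht0.le
  have hlim : Tendsto (fun t : ℝ => t * C) (𝓝[>] 0) (𝓝 0) :=
    ((continuous_mul_const C).tendsto' 0 0 (zero_mul C)).mono_left nhdsWithin_le_nhds
  refine ⟨x, hx, le_antisymm (ge_of_tendsto hlim ?_) (apply_nonneg p _)⟩
  filter_upwards [Ioo_mem_nhdsGT one_pos] with t ht using happrox t ht

end FixedPoint

section Box

variable {ι : Type*} [Fintype ι] {a b : ι → ℝ}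

/-- The seminorm `maxᵢ |u i| / (b i - a i)`; degenerate coordinates (`a i = b i`) are ignored
because `(0 : ℝ)⁻¹ = 0`. -/
noncomputable def boxSeminorm (a b : ι → ℝ) : Seminorm ℝ (ι → ℝ) :=
  (normSeminorm ℝ (ι → ℝ)).comp (LinearMap.mulLeft ℝ (b - a)⁻¹)

theorem boxSeminorm_apply (u : ι → ℝ) : boxSeminorm a b u = ‖(b - a)⁻¹ * u‖ := rfl

theorem continuous_boxSeminorm : Continuous (boxSeminorm a b) :=
  continuous_norm.comp (continuous_const.mul continuous_id)

theorem abs_sub_le_boxSeminorm_mul {x x' : ι → ℝ} (hx : x ∈ Icc a b) (hx' : x' ∈ Icc a b)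
    (j : ι) : |x j - x' j| ≤ boxSeminorm a b (x - x') * (b j - a j) := by
  rcases eq_or_ne (b j - a j) 0 with hw | hw
  · rw [hw, mul_zero, abs_nonpos_iff, sub_eq_zero]
    linarith [hx.1 j, hx.2 j, hx'.1 j, hx'.2 j]
  · have hj : |(b j - a j)⁻¹ * (x j - x' j)| ≤ boxSeminorm a b (x - x') := by
      simpa [boxSeminorm_apply] using norm_le_pi_norm ((b - a)⁻¹ * (x - x')) j
    have hw0 : 0 < b j - a j := lt_of_le_of_ne (by linarith [hx.1 j, hx.2 j]) hw.symm
    rwa [abs_mul, abs_inv, abs_of_pos hw0, inv_mul_le_iff₀ hw0, mul_comm] at hj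

theorem eq_of_boxSeminorm_sub_eq_zero {x x' : ι → ℝ} (hx : x ∈ Icc a b) (hx' : x' ∈ Icc a b)
    (h : boxSeminorm a b (x - x') = 0) : x = x' :=
  funext fun j => by simpa [h, sub_eq_zero] using abs_sub_le_boxSeminorm_mul hx hx' j

theorem boxSeminorm_le_of_abs_le {v : ι → ℝ} {r : ℝ} (hr : 0 ≤ r)
    (h : ∀ i, |v i| ≤ r * (b i - a i)) : boxSeminorm a b v ≤ r := by
  rw [boxSeminorm_apply]
  refine (pi_norm_le_iff_of_nonneg hr).2 fun i => ?_
  rw [Pi.mul_apply, Pi.inv_apply, Pi.sub_apply, Real.norm_eq_abs, abs_mul, abs_inv]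
  rcases eq_or_ne (b i - a i) 0 with hw | hw
  · simp [hw, hr]
  · have hw0 : 0 < |b i - a i| := abs_pos.2 hw
    rw [inv_mul_le_iff₀ hw0, mul_comm]
    exact (h i).trans (mul_le_mul_of_nonneg_left (le_abs_self _) hr)

theorem Matrix.sum_abs_mul_sub_le_of_mem_Icc (hab : a ≤ b) {B : Matrix ι ι ℝ} {c y : ι → ℝ}
    (hB : ∀ x ∈ Icc a b, c + B *ᵥ (x - y) ∈ Icc a b) (i : ι) :
    ∑ j, |B i j| * (b j - a j) ≤ b i - a i := by
  classical
  -- Evaluate the `i`-th row at the two corners of the box that maximise and minimise it.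
  set xp : ι → ℝ := fun j => if 0 ≤ B i j then b j else a j
  set xm : ι → ℝ := fun j => if 0 ≤ B i j then a j else b j
  have hxp : xp ∈ Icc a b := ⟨fun j => by simp only [xp]; split_ifs <;> simp [hab j],
    fun j => by simp only [xp]; split_ifs <;> simp [hab j]⟩
  have hxm : xm ∈ Icc a b := ⟨fun j => by simp only [xm]; split_ifs <;> simp [hab j],
    fun j => by simp only [xm]; split_ifs <;> simp [hab j]⟩
  have hdiff : (B *ᵥ (xp - y)) i - (B *ᵥ (xm - y)) i = ∑ j, |B i j| * (b j - a j) := by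
    simp only [mulVec, dotProduct, ← Finset.sum_sub_distrib]
    refine Finset.sum_congr rfl fun j _ => ?_
    simp only [xp, xm, Pi.sub_apply]
    split_ifs with h
    · rw [abs_of_nonneg h]; ring
    · rw [abs_of_neg (not_le.1 h)]; ring
  have hp := ((hB xp hxp).2 i)
  have hm := ((hB xm hxm).1 i)
  simp only [Pi.add_apply] at hp hm
  linarith

theorem boxSeminorm_mulVec_sub_le {B : Matrix ι ι ℝ} {c y : ι → ℝ}
    (hB : ∀ x ∈ Icc a b, c + B *ᵥ (x - y) ∈ Icc a b) {x x' : ι → ℝ} (hx : x ∈ Icc a b)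
    (hx' : x' ∈ Icc a b) : boxSeminorm a b (B *ᵥ (x - x')) ≤ boxSeminorm a b (x - x') := by
  have hab : a ≤ b := hx.1.trans hx.2
  set r := boxSeminorm a b (x - x')
  refine boxSeminorm_le_of_abs_le (apply_nonneg _ _) fun i => ?_
  calc |(B *ᵥ (x - x')) i| ≤ ∑ j, |B i j| * |x j - x' j| := by
        simpa only [mulVec, dotProduct, Pi.sub_apply, abs_mul] using
          Finset.abs_sum_le_sum_abs (fun j => B i j * (x - x') j) Finset.univ
    _ ≤ ∑ j, |B i j| * (r * (b j - a j)) := by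
        gcongr with j
        exact abs_sub_le_boxSeminorm_mul hx hx' j
    _ = r * ∑ j, |B i j| * (b j - a j) := by
        rw [Finset.mul_sum]; exact Finset.sum_congr rfl fun j _ => by ring
    _ ≤ r * (b i - a i) :=
        mul_le_mul_of_nonneg_left (B.sum_abs_mul_sub_le_of_mem_Icc hab hB i) (apply_nonneg _ _)

end Box

section Calculus

variable {m n : Type*} [Fintype n]

theorem Convex.intervalIntegral_zero_one_mem {E : Type*} [NormedAddCommGroup E]
    [NormedSpace ℝ E] [CompleteSpace E] {s : Set E} (hs : Convex ℝ s) (hsc : IsClosed s)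
    {φ : ℝ → E} (hφ : ContinuousOn φ (Icc 0 1)) (hφs : ∀ t ∈ Icc (0 : ℝ) 1, φ t ∈ s) :
    ∫ t in (0 : ℝ)..1, φ t ∈ s := by
  have hvol : volume (Ioc (0 : ℝ) 1) = 1 := by simp
  have havg : ⨍ t in Ioc (0 : ℝ) 1, φ t = ∫ t in (0 : ℝ)..1, φ t := by
    rw [setAverage_eq, measureReal_def, hvol, intervalIntegral.integral_of_le zero_le_one]
    simp
  rw [← havg]
  exact hs.set_average_mem hsc (by simp [hvol]) (by simp [hvol])
    ((ae_restrict_mem measurableSet_Ioc).mono fun t ht => hφs t (Ioc_subset_Icc_self ht))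
    ((hφ.integrableOn_compact isCompact_Icc).mono_set Ioc_subset_Icc_self)

theorem ContinuousOn.mulVec_comp_segment {G : (n → ℝ) → Matrix m n ℝ} {s : Set (n → ℝ)}
    (hG : ContinuousOn G s) {x₁ x₂ : n → ℝ} (hseg : segment ℝ x₂ x₁ ⊆ s) (v : n → ℝ) :
    ContinuousOn (fun t : ℝ => G (x₂ + t • (x₁ - x₂)) *ᵥ v) (Icc 0 1) :=
  (continuous_id.matrix_mulVec continuous_const).comp_continuousOn
    (hG.comp (by fun_prop) fun t ht =>
      hseg (by rw [segment_eq_image']; exact mem_image_of_mem _ ht))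

theorem sub_eq_intervalIntegral_mulVec [Fintype m] {f : (n → ℝ) → (m → ℝ)}
    {J : (n → ℝ) → Matrix m n ℝ} {s : Set (n → ℝ)} {x₁ x₂ : n → ℝ} (hseg : segment ℝ x₂ x₁ ⊆ s)
    (hf : ∀ z ∈ s, HasFDerivAt f (LinearMap.toContinuousLinearMap (Matrix.mulVecLin (J z))) z)
    (hJ : ContinuousOn J s) :
    f x₁ - f x₂ = ∫ t in (0 : ℝ)..1, J (x₂ + t • (x₁ - x₂)) *ᵥ (x₁ - x₂) := by
  set γ : ℝ → (n → ℝ) := fun t => x₂ + t • (x₁ - x₂)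
  have hderiv : ∀ t ∈ uIcc (0 : ℝ) 1, HasDerivAt (f ∘ γ) (J (γ t) *ᵥ (x₁ - x₂)) t := by
    intro t ht
    rw [uIcc_of_le zero_le_one] at ht
    have hγ : HasDerivAt γ (x₁ - x₂) t := by
      simpa only [one_smul] using ((hasDerivAt_id' t).smul_const (x₁ - x₂)).const_add x₂
    have hγs : γ t ∈ s := hseg (by rw [segment_eq_image']; exact mem_image_of_mem _ ht)
    simpa using (hf (γ t) hγs).comp_hasDerivAt t hγ
  have hint := (hJ.mulVec_comp_segment hseg (x₁ - x₂)).intervalIntegrable_of_Icc (μ := volume)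
    zero_le_one
  rw [intervalIntegral.integral_eq_sub_of_hasDerivAt hderiv hint]
  simp [γ]

theorem HasFDerivAt.id_sub_mulVec [DecidableEq n] {f : (n → ℝ) → (n → ℝ)} {J : Matrix n n ℝ}
    {z : n → ℝ} (hf : HasFDerivAt f (LinearMap.toContinuousLinearMap (Matrix.mulVecLin J)) z)
    (Y : Matrix n n ℝ) :
    HasFDerivAt (fun x => x - Y *ᵥ f x)
      (LinearMap.toContinuousLinearMap (Matrix.mulVecLin (1 - Y * J))) z := by
  have hY := (LinearMap.toContinuousLinearMap (Matrix.mulVecLin Y)).hasFDerivAt.comp z hf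
  refine ((hasFDerivAt_id z).sub hY).congr_fderiv ?_
  ext v : 1
  simp

end Calculus

section BoxSelfMap

variable {ι : Type*} [Fintype ι] {a b y : ι → ℝ} {D : Set (ι → ℝ)} {g : (ι → ℝ) → (ι → ℝ)}
  {G : (ι → ℝ) → Matrix ι ι ℝ}

theorem mapsTo_Icc_of_forall_mulVec_mem_Icc (hy : y ∈ Icc a b) (hD : Icc a b ⊆ D)
    (hg : ∀ z ∈ D, HasFDerivAt g (LinearMap.toContinuousLinearMap (Matrix.mulVecLin (G z))) z)
    (hG : ContinuousOn G D)
    (hGK : ∀ z ∈ Icc a b, ∀ x ∈ Icc a b, g y + G z *ᵥ (x - y) ∈ Icc a b) :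
    MapsTo g (Icc a b) (Icc a b) := by
  intro x hx
  have hseg : segment ℝ y x ⊆ D := ((convex_Icc a b).segment_subset hy hx).trans hD
  have hcont := hG.mulVec_comp_segment hseg (x - y)
  have hgx : g x = ∫ t in (0 : ℝ)..1, (g y + G (y + t • (x - y)) *ᵥ (x - y)) := by
    rw [intervalIntegral.integral_add intervalIntegrable_const
      (hcont.intervalIntegrable_of_Icc zero_le_one), intervalIntegral.integral_const,
      ← sub_eq_intervalIntegral_mulVec hseg hg hG]
    simp
  rw [hgx]
  exact (convex_Icc a b).intervalIntegral_zero_one_mem isClosed_Icc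
    (continuousOn_const.add hcont)
    fun t ht => hGK _ ((convex_Icc a b).add_smul_sub_mem hy hx ht) x hx

theorem boxSeminorm_sub_le_of_forall_mulVec_mem_Icc (hD : Icc a b ⊆ D)
    (hg : ∀ z ∈ D, HasFDerivAt g (LinearMap.toContinuousLinearMap (Matrix.mulVecLin (G z))) z)
    (hG : ContinuousOn G D)
    (hGK : ∀ z ∈ Icc a b, ∀ x ∈ Icc a b, g y + G z *ᵥ (x - y) ∈ Icc a b)
    {x₁ x₂ : ι → ℝ} (h₁ : x₁ ∈ Icc a b) (h₂ : x₂ ∈ Icc a b) :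
    boxSeminorm a b (g x₁ - g x₂) ≤ boxSeminorm a b (x₁ - x₂) := by
  have hseg : segment ℝ x₂ x₁ ⊆ D := ((convex_Icc a b).segment_subset h₂ h₁).trans hD
  rw [sub_eq_intervalIntegral_mulVec hseg hg hG, ← Seminorm.mem_closedBall_zero]
  refine (Seminorm.convex_closedBall _ _ _).intervalIntegral_zero_one_mem ?_
    (hG.mulVec_comp_segment hseg _) fun t ht => (Seminorm.mem_closedBall_zero _).2
      (boxSeminorm_mulVec_sub_le (hGK _ ((convex_Icc a b).add_smul_sub_mem h₂ h₁ ht)) h₁ h₂)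
  rw [Seminorm.closedBall_zero_eq]
  exact isClosed_le continuous_boxSeminorm continuous_const

end BoxSelfMap

theorem krawczyk_subset_existence_general (n : ℕ)
    (D : Set (Fin n → ℝ))
    (f : (Fin n → ℝ) → (Fin n → ℝ))
    (J : (Fin n → ℝ) → Matrix (Fin n) (Fin n) ℝ)
    (hf : ∀ z ∈ D, HasFDerivAt f (LinearMap.toContinuousLinearMap (Matrix.mulVecLin (J z))) z)
    (hJc : ContinuousOn J D)
    (a b : Fin n → ℝ)
    (X : Set (Fin n → ℝ)) (hX : X = Set.Icc a b) (hXD : X ⊆ D)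
    (M : Set (Matrix (Fin n) (Fin n) ℝ))
    (hJM : ∀ z ∈ X, J z ∈ M)
    (y : Fin n → ℝ) (hy : y ∈ X)
    (Y : Matrix (Fin n) (Fin n) ℝ) (hY : IsUnit Y)
    (hsub : { w | ∃ A ∈ M, ∃ x ∈ X,
      w = y - Y.mulVec (f y) + (1 - Y * A).mulVec (x - y) } ⊆ X) :
    ∃ xstar ∈ X, f xstar = 0 := by
  subst hX
  set g : (Fin n → ℝ) → (Fin n → ℝ) := fun x => x - Y *ᵥ f x
  have hg : ∀ z ∈ D, HasFDerivAt g
      (LinearMap.toContinuousLinearMap (Matrix.mulVecLin (1 - Y * J z))) z :=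
    fun z hz => (hf z hz).id_sub_mulVec Y
  have hG : ContinuousOn (fun z => 1 - Y * J z) D :=
    (continuous_const.sub (continuous_const.matrix_mul continuous_id)).comp_continuousOn hJc
  have hK : ∀ z ∈ Icc a b, ∀ x ∈ Icc a b, g y + (1 - Y * J z) *ᵥ (x - y) ∈ Icc a b :=
    fun z hz x hx => hsub ⟨J z, hJM z hz, x, hx, rfl⟩
  have hgX := mapsTo_Icc_of_forall_mulVec_mem_Icc hy hXD hg hG hK
  obtain ⟨x, hx, hx0⟩ := exists_seminorm_sub_eq_zero_of_nonexpansive continuous_boxSeminorm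
    isCompact_Icc (convex_Icc a b) ⟨y, hy⟩
    (fun z hz => (hg z (hXD hz)).continuousAt.continuousWithinAt) hgX
    fun x₁ h₁ x₂ h₂ => boxSeminorm_sub_le_of_forall_mulVec_mem_Icc hXD hg hG hK h₁ h₂
  have hfix : x = g x := eq_of_boxSeminorm_sub_eq_zero hx (hgX hx) hx0
  refine ⟨x, hx, mulVec_injective_iff_isUnit.2 hY ?_⟩
  rw [mulVec_zero]
  exact sub_eq_self.mp hfix.symm

/-- Krawczyk operator, Property 3: if `K(y, X) ⊆ X` for some `y ∈ X` and some invertible real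
`n × n` matrix `Y`, then `f` has a zero in the box `X`. -/
theorem krawczyk_subset_existence (n : ℕ) (hn : 1 ≤ n)
    (D : Set (Fin n → ℝ)) (hD : IsOpen D)
    (f : (Fin n → ℝ) → (Fin n → ℝ))
    (J : (Fin n → ℝ) → Matrix (Fin n) (Fin n) ℝ)
    (hf : ∀ z ∈ D, HasFDerivAt f (LinearMap.toContinuousLinearMap (Matrix.mulVecLin (J z))) z)
    (hJc : ContinuousOn J D)
    (a b : Fin n → ℝ) (hab : a ≤ b)
    (X : Set (Fin n → ℝ)) (hX : X = Set.Icc a b) (hXD : X ⊆ D)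
    (M : Set (Matrix (Fin n) (Fin n) ℝ)) (hM : Convex ℝ M)
    (hJM : ∀ z ∈ X, J z ∈ M)
    (y : Fin n → ℝ) (hy : y ∈ X)
    (Y : Matrix (Fin n) (Fin n) ℝ) (hY : IsUnit Y)
    (hsub : { w | ∃ A ∈ M, ∃ x ∈ X,
      w = y - Y.mulVec (f y) + (1 - Y * A).mulVec (x - y) } ⊆ X) :
    ∃ xstar ∈ X, f xstar = 0 :=
  krawczyk_subset_existence_general n D f J hf hJc a b X hX hXD M hJM y hy Y hY hsub
end

section
/- If there exist y ∈ X and an invertible n×n real matrix Y such that K(y, X) is strictly included in X, i.e., K(y, X) is contained in the interior of X, then f has exactly one zero in X: there exists a unique x* ∈ X with f(x*) = 0. -/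
/-!
Write `g x = x - Y f(x)`, whose derivative at `z` is `1 - Y f'(z)`. By the mean value theorem
applied to one coordinate of `g` at a time, each coordinate of `g x` (for `x ∈ X`) is the
corresponding coordinate of a point of `K(y, X)`, so `g` maps `X` into itself. Evaluating
`K(y, X) ⊆ int X` at opposite corners of `X` shows that every `L = 1 - Y A`, `A ∈ M`, satisfies
`∑ⱼ |Lᵢⱼ| wⱼ < wᵢ` for the widths `w = b - a`; by compactness of `f'(X)` this holds uniformly with
a factor `θ < 1`. Hence `g` is a `θ`-contraction of `X` for the sup norm weighted by `w`, and its
unique fixed point is the unique zero of `f` because `Y` is invertible.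
-/

open Set Filter Topology Function Matrix

section Box

variable {ι : Type*} [Fintype ι] {a b : ι → ℝ}

theorem mem_interior_Icc_pi_iff {x : ι → ℝ} :
    x ∈ interior (Icc a b) ↔ ∀ i, x i ∈ Ioo (a i) (b i) := by
  rw [← pi_univ_Icc, interior_pi_set Set.finite_univ]
  simp only [interior_Icc, mem_univ_pi]

theorem abs_dotProduct_le_of_abs_le {r v w : ι → ℝ} (h : ∀ j, |v j| ≤ w j) :
    |r ⬝ᵥ v| ≤ ∑ j, |r j| * w j :=
  (Finset.abs_sum_le_sum_abs _ _).trans <| Finset.sum_le_sum fun j _ => by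
    rw [abs_mul]; exact mul_le_mul_of_nonneg_left (h j) (abs_nonneg _)

theorem exists_mem_Icc_dotProduct_sub_eq (hab : a ≤ b) (r : ι → ℝ) :
    ∃ p ∈ Icc a b, ∃ q ∈ Icc a b, r ⬝ᵥ p - r ⬝ᵥ q = ∑ j, |r j| * (b j - a j) := by
  classical
  refine ⟨fun j => if 0 ≤ r j then b j else a j, ⟨fun j => ?_, fun j => ?_⟩,
    fun j => if 0 ≤ r j then a j else b j, ⟨fun j => ?_, fun j => ?_⟩, ?_⟩
  iterate 4 (dsimp only; split_ifs <;> simp [hab j])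
  · simp only [dotProduct, ← Finset.sum_sub_distrib]
    refine Finset.sum_congr rfl fun j _ => ?_
    split_ifs with h
    · rw [abs_of_nonneg h]; ring
    · rw [abs_of_neg (not_le.mp h)]; ring

theorem sum_abs_mul_sub_lt_of_add_mulVec_mem_interior (hab : a ≤ b) {L : Matrix ι ι ℝ}
    {c y : ι → ℝ} (h : ∀ x ∈ Icc a b, c + L *ᵥ (x - y) ∈ interior (Icc a b)) (i : ι) :
    ∑ j, |L i j| * (b j - a j) < b i - a i := by
  obtain ⟨p, hp, q, hq, hpq⟩ := exists_mem_Icc_dotProduct_sub_eq hab (L i)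
  have hp' := (mem_interior_Icc_pi_iff.1 (h p hp) i).2
  have hq' := (mem_interior_Icc_pi_iff.1 (h q hq) i).1
  simp only [Pi.add_apply, mulVec, dotProduct_sub] at hp' hq'
  linarith

end Box

theorem IsCompact.exists_mem_Ioo_forall_lt_mul {α ι : Type*} [TopologicalSpace α] [Finite ι]
    {K : Set α} (hK : IsCompact K) {ρ : ι → α → ℝ} {d : ι → ℝ} (hρ : ∀ i, Continuous (ρ i))
    (hlt : ∀ A ∈ K, ∀ i, ρ i A < d i) :
    ∃ θ ∈ Ioo (0 : ℝ) 1, ∀ A ∈ K, ∀ i, ρ i A < θ * d i := by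
  have hopen : IsOpen {p : ℝ × α | ∀ i, ρ i p.2 < p.1 * d i} := by
    rw [ofPred_forall]
    exact isOpen_iInter_of_finite fun i =>
      isOpen_lt ((hρ i).comp continuous_snd) (continuous_fst.mul continuous_const)
  have hev : ∀ᶠ θ in 𝓝 (1 : ℝ), ∀ A ∈ K, ∀ i, ρ i A < θ * d i :=
    hK.eventually_forall_of_forall_eventually fun A hA =>
      hopen.mem_nhds fun i => by simpa using hlt A hA i
  exact ((hev.filter_mono nhdsWithin_le_nhds).and (Ioo_mem_nhdsLT zero_lt_one)).exists.imp
    fun θ h => ⟨h.2, h.1⟩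

theorem LipschitzOnWith.exists_unique_isFixedPt {E : Type*} [MetricSpace E] [CompleteSpace E]
    {S : Set E} {g : E → E} {K : NNReal} (hS : IsClosed S) (hne : S.Nonempty)
    (hmaps : MapsTo g S S) (hg : LipschitzOnWith K g S) (hK : K < 1) :
    ∃! x, x ∈ S ∧ IsFixedPt g x := by
  obtain ⟨x, hx⟩ := hne
  obtain ⟨p, hp, hfix, -⟩ := ContractingWith.exists_fixedPoint' hS.isComplete hmaps
    ⟨hK, hg.mapsToRestrict hmaps⟩ hx (edist_ne_top x (g x))
  refine ⟨p, ⟨hp, hfix⟩, fun q ⟨hq, hqfix⟩ => ?_⟩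
  have hdist := hg.dist_le_mul q hq p hp
  rw [hqfix.eq, hfix.eq] at hdist
  exact dist_le_zero.1 <| by
    nlinarith [dist_nonneg (x := q) (y := p), (NNReal.coe_lt_coe.2 hK : (K : ℝ) < 1)]

section MeanValue

variable {ι : Type*} [Fintype ι]

theorem Convex.exists_apply_sub_eq_mulVec {s : Set (ι → ℝ)} (hs : Convex ℝ s)
    {g : (ι → ℝ) → ι → ℝ} {L : (ι → ℝ) → Matrix ι ι ℝ}
    (hg : ∀ z ∈ s, HasFDerivAt g (LinearMap.toContinuousLinearMap (L z).mulVecLin) z)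
    {x x' : ι → ℝ} (hx : x ∈ s) (hx' : x' ∈ s) (i : ι) :
    ∃ ξ ∈ s, g x i - g x' i = (L ξ *ᵥ (x - x')) i := by
  let π : (ι → ℝ) →L[ℝ] ℝ := ContinuousLinearMap.proj i
  obtain ⟨ξ, hξ, heq⟩ := domain_mvt (f := fun z => g z i)
    (fun z hz => (π.hasFDerivAt.comp z (hg z hz)).hasFDerivWithinAt) hs hx' hx
  exact ⟨ξ, hs.segment_subset hx' hx hξ, heq⟩

theorem Convex.abs_apply_sub_le_of_hasFDerivAt {s : Set (ι → ℝ)} (hs : Convex ℝ s)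
    {g : (ι → ℝ) → ι → ℝ} {L : (ι → ℝ) → Matrix ι ι ℝ}
    (hg : ∀ z ∈ s, HasFDerivAt g (LinearMap.toContinuousLinearMap (L z).mulVecLin) z)
    {d : ι → ℝ} {θ : ℝ} (hL : ∀ z ∈ s, ∀ i, ∑ j, |L z i j| * d j ≤ θ * d i)
    {x x' : ι → ℝ} (hx : x ∈ s) (hx' : x' ∈ s) {t : ℝ} (ht : 0 ≤ t)
    (hxx' : ∀ j, |x j - x' j| ≤ t * d j) (i : ι) :
    |g x i - g x' i| ≤ θ * t * d i := by
  obtain ⟨ξ, hξ, heq⟩ := hs.exists_apply_sub_eq_mulVec hg hx hx' i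
  calc |g x i - g x' i| ≤ ∑ j, |L ξ i j| * (t * d j) := by
        rw [heq]; exact abs_dotProduct_le_of_abs_le hxx'
    _ = t * ∑ j, |L ξ i j| * d j := by
        rw [Finset.mul_sum]; exact Finset.sum_congr rfl fun j _ => by ring
    _ ≤ t * (θ * d i) := mul_le_mul_of_nonneg_left (hL ξ hξ i) ht
    _ = θ * t * d i := by ring

theorem mapsTo_interior_Icc_of_add_mulVec_mem {a b : ι → ℝ} {g : (ι → ℝ) → ι → ℝ}
    {L : (ι → ℝ) → Matrix ι ι ℝ}
    (hg : ∀ z ∈ Icc a b, HasFDerivAt g (LinearMap.toContinuousLinearMap (L z).mulVecLin) z)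
    {y : ι → ℝ} (hy : y ∈ Icc a b)
    (hK : ∀ ξ ∈ Icc a b, ∀ x ∈ Icc a b, g y + L ξ *ᵥ (x - y) ∈ interior (Icc a b)) :
    MapsTo g (Icc a b) (interior (Icc a b)) := by
  intro x hx
  refine mem_interior_Icc_pi_iff.2 fun i => ?_
  obtain ⟨ξ, hξ, heq⟩ := (convex_Icc a b).exists_apply_sub_eq_mulVec hg hx hy i
  simpa only [Pi.add_apply, ← heq, add_sub_cancel] using mem_interior_Icc_pi_iff.1 (hK ξ hξ x hx) i

end MeanValue

theorem exists_unique_isFixedPt_of_weighted_contraction {ι : Type*} [Fintype ι]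
    {S : Set (ι → ℝ)} {g : (ι → ℝ) → ι → ℝ} (hS : IsClosed S) (hne : S.Nonempty)
    (hmaps : MapsTo g S S) {d : ι → ℝ} (hd : ∀ i, 0 < d i) {θ : ℝ} (hθ0 : 0 ≤ θ) (hθ1 : θ < 1)
    (hg : ∀ x ∈ S, ∀ x' ∈ S, ∀ t, 0 ≤ t → (∀ j, |x j - x' j| ≤ t * d j) →
      ∀ i, |g x i - g x' i| ≤ θ * t * d i) :
    ∃! x, x ∈ S ∧ IsFixedPt g x := by
  -- in the coordinates `x = d * u` the weighted estimate is a contraction for the sup metric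
  let σ : (ι → ℝ) ≃ (ι → ℝ) := Equiv.piCongrRight fun i => Equiv.mulLeft₀ (d i) (hd i).ne'
  have hσ : Continuous σ := continuous_pi fun i => continuous_const.mul (continuous_apply i)
  refine (σ.existsUnique_congr fun u => ?_).1 <| LipschitzOnWith.exists_unique_isFixedPt
    (g := σ.symm ∘ g ∘ σ) (hS.preimage hσ) ?_ ?_ ?_ (Real.toNNReal_lt_one.2 hθ1)
  · simp only [mem_preimage, IsFixedPt, Function.comp_apply, Equiv.symm_apply_eq]
  · obtain ⟨x, hx⟩ := hne
    exact ⟨σ.symm x, by simpa only [mem_preimage, Equiv.apply_symm_apply] using hx⟩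
  · intro u hu
    simpa only [Function.comp_apply, mem_preimage, Equiv.apply_symm_apply] using hmaps hu
  · refine LipschitzOnWith.of_dist_le_mul fun u hu u' hu' => ?_
    rw [Real.coe_toNNReal _ hθ0, dist_pi_le_iff (by positivity)]
    have hσuu' : ∀ j, |σ u j - σ u' j| ≤ dist u u' * d j := fun j => by
      simp only [Equiv.piCongrRight_apply, Equiv.mulLeft₀_apply, Pi.map_apply, σ]
      rw [← mul_sub, abs_mul, abs_of_pos (hd j), mul_comm]
      exact mul_le_mul_of_nonneg_right (Real.dist_eq _ _ ▸ dist_le_pi_dist u u' j) (hd j).le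
    intro i
    have hgi := hg _ hu _ hu' _ dist_nonneg hσuu' i
    simp only [Function.comp_apply, Equiv.piCongrRight_symm_apply, Equiv.mulLeft₀_symm_apply,
      Pi.map_apply, Real.dist_eq, σ]
    rw [← mul_sub, abs_mul, abs_inv, abs_of_pos (hd i), inv_mul_le_iff₀ (hd i)]
    exact hgi.trans_eq (by ring)

section Newton

variable {ι : Type*} [Fintype ι] [DecidableEq ι]

def newtonMap (Y : Matrix ι ι ℝ) (f : (ι → ℝ) → ι → ℝ) (x : ι → ℝ) : ι → ℝ :=
  x - Y *ᵥ f x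

theorem hasFDerivAt_newtonMap (Y : Matrix ι ι ℝ) {f : (ι → ℝ) → ι → ℝ} {A : Matrix ι ι ℝ}
    {z : ι → ℝ} (hf : HasFDerivAt f (LinearMap.toContinuousLinearMap A.mulVecLin) z) :
    HasFDerivAt (newtonMap Y f) (LinearMap.toContinuousLinearMap (1 - Y * A).mulVecLin) z := by
  refine ((hasFDerivAt_id z).sub
    ((LinearMap.toContinuousLinearMap Y.mulVecLin).hasFDerivAt.comp z hf)).congr_fderiv ?_
  ext v : 1
  simp [mulVec_mulVec]

theorem newtonMap_isFixedPt_iff {Y : Matrix ι ι ℝ} (hY : IsUnit Y) {f : (ι → ℝ) → ι → ℝ}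
    {x : ι → ℝ} : IsFixedPt (newtonMap Y f) x ↔ f x = 0 := by
  rw [IsFixedPt, newtonMap, sub_eq_self, (mulVec_injective_iff_isUnit.2 hY).eq_iff' (mulVec_zero Y)]

end Newton

theorem krawczyk_strict_subset_uniqueness_general (n : ℕ)
    (D : Set (Fin n → ℝ))
    (f : (Fin n → ℝ) → (Fin n → ℝ))
    (J : (Fin n → ℝ) → Matrix (Fin n) (Fin n) ℝ)
    (hf : ∀ z ∈ D, HasFDerivAt f (LinearMap.toContinuousLinearMap (Matrix.mulVecLin (J z))) z)
    (hJc : ContinuousOn J D)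
    (a b : Fin n → ℝ)
    (X : Set (Fin n → ℝ)) (hX : X = Set.Icc a b) (hXD : X ⊆ D)
    (M : Set (Matrix (Fin n) (Fin n) ℝ))
    (hJM : ∀ z ∈ X, J z ∈ M)
    (y : Fin n → ℝ) (hy : y ∈ X)
    (Y : Matrix (Fin n) (Fin n) ℝ) (hY : IsUnit Y)
    (hsub : { w | ∃ A ∈ M, ∃ x ∈ X,
      w = y - Y.mulVec (f y) + (1 - Y * A).mulVec (x - y) } ⊆ interior X) :
    ∃! xstar, xstar ∈ X ∧ f xstar = 0 := by
  subst hX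
  have hg : ∀ z ∈ Icc a b,
      HasFDerivAt (newtonMap Y f) (LinearMap.toContinuousLinearMap (1 - Y * J z).mulVecLin) z :=
    fun z hz => hasFDerivAt_newtonMap Y (hf z (hXD hz))
  have hK : ∀ A ∈ M, ∀ x ∈ Icc a b,
      newtonMap Y f y + (1 - Y * A) *ᵥ (x - y) ∈ interior (Icc a b) :=
    fun A hA x hx => hsub ⟨A, hA, x, hx, rfl⟩
  have hrow : ∀ A ∈ M, ∀ i, ∑ j, |(1 - Y * A) i j| * (b j - a j) < b i - a i :=
    fun A hA => sum_abs_mul_sub_lt_of_add_mulVec_mem_interior (hy.1.trans hy.2) (hK A hA)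
  have hd : ∀ i, 0 < b i - a i := fun i =>
    sub_pos.2 <| nonempty_Ioo.1 ⟨_, mem_interior_Icc_pi_iff.1 (hK _ (hJM y hy) y hy) i⟩
  obtain ⟨θ, ⟨hθ0, hθ1⟩, hθ⟩ :=
    (isCompact_Icc.image_of_continuousOn (hJc.mono hXD)).exists_mem_Ioo_forall_lt_mul
      (ρ := fun i A => ∑ j, |(1 - Y * A) i j| * (b j - a j)) (fun i => by fun_prop)
      (forall_mem_image.2 fun z hz => hrow _ (hJM z hz))
  have hmaps : MapsTo (newtonMap Y f) (Icc a b) (Icc a b) :=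
    (mapsTo_interior_Icc_of_add_mulVec_mem hg hy fun ξ hξ => hK _ (hJM ξ hξ)).mono_right
      interior_subset
  simpa only [newtonMap_isFixedPt_iff hY] using
    exists_unique_isFixedPt_of_weighted_contraction isClosed_Icc ⟨y, hy⟩ hmaps hd hθ0.le hθ1
      fun x hx x' hx' t ht hxx' => (convex_Icc a b).abs_apply_sub_le_of_hasFDerivAt hg
        (fun z hz i => (hθ _ (mem_image_of_mem J hz) i).le) hx hx' ht hxx'

/-- Krawczyk operator, Property 4: if `K(y, X)` is strictly included in `X` (i.e. contained in
the interior of `X`) for some `y ∈ X` and some invertible real `n × n` matrix `Y`, then `f`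
has exactly one zero in the box `X`. -/
theorem krawczyk_strict_subset_uniqueness (n : ℕ) (hn : 1 ≤ n)
    (D : Set (Fin n → ℝ)) (hD : IsOpen D)
    (f : (Fin n → ℝ) → (Fin n → ℝ))
    (J : (Fin n → ℝ) → Matrix (Fin n) (Fin n) ℝ)
    (hf : ∀ z ∈ D, HasFDerivAt f (LinearMap.toContinuousLinearMap (Matrix.mulVecLin (J z))) z)
    (hJc : ContinuousOn J D)
    (a b : Fin n → ℝ) (hab : a ≤ b)
    (X : Set (Fin n → ℝ)) (hX : X = Set.Icc a b) (hXD : X ⊆ D)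
    (M : Set (Matrix (Fin n) (Fin n) ℝ)) (hM : Convex ℝ M)
    (hJM : ∀ z ∈ X, J z ∈ M)
    (y : Fin n → ℝ) (hy : y ∈ X)
    (Y : Matrix (Fin n) (Fin n) ℝ) (hY : IsUnit Y)
    (hsub : { w | ∃ A ∈ M, ∃ x ∈ X,
      w = y - Y.mulVec (f y) + (1 - Y * A).mulVec (x - y) } ⊆ interior X) :
    ∃! xstar, xstar ∈ X ∧ f xstar = 0 :=
  krawczyk_strict_subset_uniqueness_general n D f J hf hJc a b X hX hXD M hJM y hy Y hY hsub
end

section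
/- (Kantorovich theorem, existence part.) Under the stated hypotheses, F has a zero x* in the closed ball of center x₀ and radius t* = ((1 − √(1 − 2h))/h)·η, and the Newton sequence defined by x_{k+1} = x_k − F'(x_k)⁻¹ F(x_k) starting from x₀ is well defined (each F'(x_k) is invertible) and converges to x*. -/
open Set Metric Filter Topology

/-!
Normalizing by `A⁻¹` reduces everything to `G = A⁻¹ ∘ F : X → X`, with `G' x₀ = 1`, `‖G x₀‖ ≤ η` and
`G'` Lipschitz with constant `L = B K`. The Newton iterates `x_k` of `G` are majorized by the Newton
iterates `t_k` of the scalar quadratic `φ t = L / 2 t² - t + η` started at `0`: inductively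
`‖x_k - x₀‖ ≤ t_k` and `‖G x_k‖ ≤ φ t_k`. Here `G' x_k` is invertible because
`‖1 - G' x_k‖ ≤ L t_k < 1`, which bounds the step by `φ t_k / (1 - L t_k) = t_{k+1} - t_k`, and the
quadratic Taylor estimate bounds `‖G x_{k+1}‖` by `L / 2 (t_{k+1} - t_k)²`, which is exactly
`φ t_{k+1}`. The `t_k` increase to the smallest root `t* = (1 - √(1 - 2 L η)) / L` of `φ`, at least
halving their distance to it at each step, so `(x_k)` is Cauchy in the closed ball of radius `t*`,
and its limit is a zero of `G` since `‖G x_k‖ ≤ φ t_k → φ t* = 0`.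
-/

noncomputable section

lemma Convex.norm_image_sub_sub_fderiv_le {E F : Type*} [NormedAddCommGroup E] [NormedSpace ℝ E]
    [NormedAddCommGroup F] [NormedSpace ℝ F] {s : Set E} (hs : Convex ℝ s) {f : E → F}
    {f' : E → E →L[ℝ] F} {L : ℝ} (hf : ∀ x ∈ s, HasFDerivAt f (f' x) x)
    (hLip : ∀ x ∈ s, ∀ y ∈ s, ‖f' x - f' y‖ ≤ L * ‖x - y‖) {x y : E} (hx : x ∈ s) (hy : y ∈ s) :
    ‖f y - f x - f' x (y - x)‖ ≤ L / 2 * ‖y - x‖ ^ 2 := by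
  set v := y - x
  have hseg : ∀ t ∈ Icc (0 : ℝ) 1, x + t • v ∈ s := fun t ht => by
    simpa [v, add_sub_cancel] using hs.add_smul_sub_mem hx hy ht
  set g : ℝ → F := fun t => f (x + t • v) - f x - t • f' x v
  have hg : ∀ t ∈ Icc (0 : ℝ) 1, HasDerivAt g ((f' (x + t • v) - f' x) v) t := fun t ht => by
    have hline : HasDerivAt (fun u : ℝ => x + u • v) v t := by
      simpa using ((hasDerivAt_id t).smul_const v).const_add x
    have := (((hf _ (hseg t ht)).comp_hasDerivAt t hline).sub_const (f x)).sub
      ((hasDerivAt_id t).smul_const (f' x v))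
    exact this.congr_deriv (by simp)
  have hg' : ∀ t ∈ Ico (0 : ℝ) 1, ‖(f' (x + t • v) - f' x) v‖ ≤ L * ‖v‖ ^ 2 * t := fun t ht =>
    calc ‖(f' (x + t • v) - f' x) v‖ ≤ ‖f' (x + t • v) - f' x‖ * ‖v‖ := (f' _ - f' x).le_opNorm v
      _ ≤ L * ‖x + t • v - x‖ * ‖v‖ := by
        gcongr; exact hLip _ (hseg t (Ico_subset_Icc_self ht)) _ hx
      _ = L * ‖v‖ ^ 2 * t := by
        rw [add_sub_cancel_left, norm_smul, Real.norm_of_nonneg ht.1]; ring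
  have hbound : ∀ t, HasDerivAt (fun u : ℝ => L * ‖v‖ ^ 2 / 2 * u ^ 2) (L * ‖v‖ ^ 2 * t) t :=
    fun t => by simpa using ((hasDerivAt_pow 2 t).const_mul (L * ‖v‖ ^ 2 / 2)).congr_deriv (by ring)
  have := image_norm_le_of_norm_deriv_right_le_deriv_boundary
    (fun t ht => (hg t ht).continuousAt.continuousWithinAt)
    (fun t ht => (hg t (Ico_subset_Icc_self ht)).hasDerivWithinAt) (by simp [g]) hbound hg'
    (right_mem_Icc.2 zero_le_one)
  rw [show L / 2 * ‖v‖ ^ 2 = L * ‖v‖ ^ 2 / 2 * 1 ^ 2 by ring]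
  simpa [g, v] using this

section Invertibility

variable {𝕜 X : Type*} [NontriviallyNormedField 𝕜] [NormedAddCommGroup X] [NormedSpace 𝕜 X]

lemma ContinuousLinearMap.isInvertible_of_norm_one_sub_lt_one [CompleteSpace X]
    {T : X →L[𝕜] X} (hT : ‖1 - T‖ < 1) : T.IsInvertible := by
  have hu : IsUnit T := by
    by_contra h
    exact nonunits.subset_compl_ball h (by rwa [mem_ball, dist_eq_norm, norm_sub_rev])
  obtain ⟨u, rfl⟩ := hu
  exact ⟨ContinuousLinearEquiv.unitsEquiv 𝕜 X u, by ext; simp⟩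

lemma ContinuousLinearMap.IsInvertible.norm_inverse_apply_le {T : X →L[𝕜] X}
    (hT : T.IsInvertible) (hT1 : ‖1 - T‖ < 1) (y : X) :
    ‖T.inverse y‖ ≤ ‖y‖ / (1 - ‖1 - T‖) := by
  set v := T.inverse y
  have hv : v = y + (1 - T) v := by simp [v, hT.self_apply_inverse]
  have : ‖v‖ ≤ ‖y‖ + ‖1 - T‖ * ‖v‖ :=
    calc ‖v‖ = ‖y + (1 - T) v‖ := congrArg _ hv
      _ ≤ ‖y‖ + ‖1 - T‖ * ‖v‖ := (norm_add_le _ _).trans (by gcongr; exact (1 - T).le_opNorm v)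
  rw [le_div_iff₀ (sub_pos.2 hT1)]
  linarith

end Invertibility

section Newton

variable {𝕜 E F G : Type*} [NontriviallyNormedField 𝕜]
  [NormedAddCommGroup E] [NormedSpace 𝕜 E] [NormedAddCommGroup F] [NormedSpace 𝕜 F]
  [NormedAddCommGroup G] [NormedSpace 𝕜 G]

def newtonStep (f : E → F) (f' : E → E →L[𝕜] F) (x : E) : E := x - (f' x).inverse (f x)

lemma newtonStep_equiv_comp (e : F ≃L[𝕜] G) (f : E → F) (f' : E → E →L[𝕜] F) :
    newtonStep (fun x => e (f x)) (fun x => (e : F →L[𝕜] G) ∘L f' x) = newtonStep f f' := by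
  ext x
  simp [newtonStep]

lemma apply_self_newtonStep_sub {f : E → F} {f' : E → E →L[𝕜] F} {x : E}
    (hx : (f' x).IsInvertible) : f' x (newtonStep f f' x - x) = -f x := by
  simp [newtonStep, hx.self_apply_inverse]

lemma norm_newtonStep_apply_le {E F : Type*} [NormedAddCommGroup E] [NormedSpace ℝ E]
    [NormedAddCommGroup F] [NormedSpace ℝ F] {s : Set E} (hs : Convex ℝ s) {f : E → F}
    {f' : E → E →L[ℝ] F} {L : ℝ} (hf : ∀ x ∈ s, HasFDerivAt f (f' x) x)
    (hLip : ∀ x ∈ s, ∀ y ∈ s, ‖f' x - f' y‖ ≤ L * ‖x - y‖) {x : E} (hx : x ∈ s)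
    (hx' : newtonStep f f' x ∈ s) (hinv : (f' x).IsInvertible) :
    ‖f (newtonStep f f' x)‖ ≤ L / 2 * ‖newtonStep f f' x - x‖ ^ 2 := by
  have := hs.norm_image_sub_sub_fderiv_le hf hLip hx hx'
  rwa [apply_self_newtonStep_sub hinv, sub_neg_eq_add, sub_add_cancel] at this

end Newton

namespace Kantorovich

def majorant (L η t : ℝ) : ℝ := L / 2 * t ^ 2 - t + η

def majorantRoot (L η : ℝ) : ℝ := (1 - √(1 - 2 * (L * η))) / L

/-- Newton's method for `majorant L η`, whose derivative is `t ↦ L * t - 1`, started at `0`. -/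
def majorantSeq (L η : ℝ) : ℕ → ℝ
  | 0 => 0
  | k + 1 => majorantSeq L η k + majorant L η (majorantSeq L η k) / (1 - L * majorantSeq L η k)

lemma majorantSeq_succ_sub (L η : ℝ) (k : ℕ) :
    majorantSeq L η (k + 1) - majorantSeq L η k =
      majorant L η (majorantSeq L η k) / (1 - L * majorantSeq L η k) :=
  add_sub_cancel_left _ _

lemma majorant_newton_step {L η t : ℝ} (ht : 1 - L * t ≠ 0) :
    majorant L η (t + majorant L η t / (1 - L * t)) =
      L / 2 * (majorant L η t / (1 - L * t)) ^ 2 := by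
  unfold majorant
  field_simp
  ring

section Majorant

variable {L η : ℝ} (hL : 0 < L)
include hL

lemma one_sub_mul_eq_sqrt_add (t : ℝ) :
    1 - L * t = √(1 - 2 * (L * η)) + L * (majorantRoot L η - t) := by
  unfold majorantRoot
  field_simp
  ring

lemma majorantRoot_pos (hη : 0 < η) : 0 < majorantRoot L η := by
  have hs : √(1 - 2 * (L * η)) < 1 := by
    rw [Real.sqrt_lt' one_pos]
    nlinarith [mul_pos hL hη]
  exact div_pos (by linarith) hL

variable (hLη : L * η ≤ 1 / 2)
include hLη

lemma majorant_eq_mul_majorantRoot_sub (t : ℝ) :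
    majorant L η t =
      (majorantRoot L η - t) * (L / 2 * (majorantRoot L η - t) + √(1 - 2 * (L * η))) := by
  unfold majorant majorantRoot
  have hsq : √(1 - 2 * (L * η)) ^ 2 = 1 - 2 * (L * η) := Real.sq_sqrt (by linarith)
  set s := √(1 - 2 * (L * η))
  field_simp
  linear_combination hsq

lemma majorant_majorantRoot : majorant L η (majorantRoot L η) = 0 := by
  rw [majorant_eq_mul_majorantRoot_sub hL hLη]
  ring

lemma majorant_newton_step_bounds {t : ℝ} (ht : t < majorantRoot L η) :
    0 < 1 - L * t ∧ t ≤ t + majorant L η t / (1 - L * t) ∧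
      t + majorant L η t / (1 - L * t) < majorantRoot L η ∧
      majorantRoot L η - (t + majorant L η t / (1 - L * t)) ≤ (majorantRoot L η - t) / 2 := by
  set s := √(1 - 2 * (L * η))
  set d := majorantRoot L η - t
  have hs : 0 ≤ s := Real.sqrt_nonneg _
  have hd : 0 < d := sub_pos.2 ht
  have hden : 0 < s + L * d := by positivity
  have hφ : majorant L η t = d * (L / 2 * d + s) := majorant_eq_mul_majorantRoot_sub hL hLη t
  have h1 : 1 - L * t = s + L * d := one_sub_mul_eq_sqrt_add hL t
  have hgap : d - majorant L η t / (1 - L * t) = d * (L * d / 2) / (s + L * d) := by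
    rw [hφ, h1]
    field_simp
    ring
  have hgap_pos : 0 < d * (L * d / 2) / (s + L * d) := by positivity
  have hgap_le : d * (L * d / 2) / (s + L * d) ≤ d / 2 := by
    rw [div_le_iff₀ hden]
    nlinarith
  refine ⟨h1 ▸ hden, ?_, by linarith, by linarith⟩
  rw [le_add_iff_nonneg_right, hφ, h1]
  positivity

variable (hη : 0 < η)
include hη

lemma majorantSeq_mem_Ico (k : ℕ) : majorantSeq L η k ∈ Ico 0 (majorantRoot L η) := by
  induction k with
  | zero => exact ⟨le_rfl, majorantRoot_pos hL hη⟩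
  | succ k ih =>
    obtain ⟨-, hmono, hlt, -⟩ := majorant_newton_step_bounds hL hLη ih.2
    exact ⟨ih.1.trans hmono, hlt⟩

lemma one_sub_mul_majorantSeq_pos (k : ℕ) : 0 < 1 - L * majorantSeq L η k :=
  (majorant_newton_step_bounds hL hLη (majorantSeq_mem_Ico hL hLη hη k).2).1

lemma majorantRoot_sub_majorantSeq_le (k : ℕ) :
    majorantRoot L η - majorantSeq L η k ≤ majorantRoot L η / 2 ^ k := by
  induction k with
  | zero => simp [majorantSeq]
  | succ k ih =>
    have := (majorant_newton_step_bounds hL hLη (majorantSeq_mem_Ico hL hLη hη k).2).2.2.2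
    rw [pow_succ, ← div_div]
    exact this.trans (by gcongr)

lemma tendsto_majorantSeq : Tendsto (majorantSeq L η) atTop (𝓝 (majorantRoot L η)) := by
  have hgeom : Tendsto (fun k : ℕ => majorantRoot L η - majorantRoot L η / 2 ^ k) atTop
      (𝓝 (majorantRoot L η)) := by
    simpa using tendsto_const_nhds.sub (tendsto_const_nhds.div_atTop
      (tendsto_pow_atTop_atTop_of_one_lt (one_lt_two : (1 : ℝ) < 2)))
  refine tendsto_of_tendsto_of_tendsto_of_le_of_le hgeom tendsto_const_nhds (fun k => ?_)
    (fun k => (majorantSeq_mem_Ico hL hLη hη k).2.le)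
  linarith [majorantRoot_sub_majorantSeq_le hL hLη hη k]

lemma mem_closedBall_of_norm_sub_le_majorantSeq {X : Type*} [NormedAddCommGroup X] {x x₀ : X}
    {k : ℕ} (hx : ‖x - x₀‖ ≤ majorantSeq L η k) : x ∈ closedBall x₀ (majorantRoot L η) :=
  mem_closedBall_iff_norm.2 (hx.trans (majorantSeq_mem_Ico hL hLη hη k).2.le)

lemma majorant_majorantSeq_succ (k : ℕ) :
    majorant L η (majorantSeq L η (k + 1)) =
      L / 2 * (majorantSeq L η (k + 1) - majorantSeq L η k) ^ 2 := by
  rw [majorantSeq_succ_sub]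
  exact majorant_newton_step (one_sub_mul_majorantSeq_pos hL hLη hη k).ne'

end Majorant

section Normalized

variable {X : Type*} [NormedAddCommGroup X] [NormedSpace ℝ X] [CompleteSpace X]
  {G : X → X} {G' : X → X →L[ℝ] X} {x₀ : X} {L η : ℝ}
  (hL : 0 < L) (hη : 0 < η) (hLη : L * η ≤ 1 / 2)
  (hG : ∀ x ∈ closedBall x₀ (majorantRoot L η), HasFDerivAt G (G' x) x)
  (hLip : ∀ x ∈ closedBall x₀ (majorantRoot L η), ∀ y ∈ closedBall x₀ (majorantRoot L η),
    ‖G' x - G' y‖ ≤ L * ‖x - y‖)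
  (hG'x₀ : G' x₀ = 1) (hGx₀ : ‖G x₀‖ ≤ η)

include hL hLη hLip hG'x₀ in
lemma newtonStep_sub_le {x : X} {t : ℝ} (ht : t ∈ Ico 0 (majorantRoot L η))
    (hx : ‖x - x₀‖ ≤ t) (hGx : ‖G x‖ ≤ majorant L η t) :
    (G' x).IsInvertible ∧ ‖newtonStep G G' x - x‖ ≤ majorant L η t / (1 - L * t) := by
  have hpos := (majorant_newton_step_bounds hL hLη ht.2).1
  have hx_mem : x ∈ closedBall x₀ (majorantRoot L η) :=
    mem_closedBall_iff_norm.2 (hx.trans ht.2.le)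
  have hdev : ‖1 - G' x‖ ≤ L * t :=
    calc ‖1 - G' x‖ = ‖G' x₀ - G' x‖ := by rw [hG'x₀]
      _ ≤ L * ‖x₀ - x‖ := hLip _ (mem_closedBall_self (ht.1.trans ht.2.le)) _ hx_mem
      _ ≤ L * t := by rw [norm_sub_rev]; gcongr
  have hlt : ‖1 - G' x‖ < 1 := by linarith
  have hinv := ContinuousLinearMap.isInvertible_of_norm_one_sub_lt_one hlt
  refine ⟨hinv, ?_⟩
  calc ‖newtonStep G G' x - x‖ = ‖(G' x).inverse (G x)‖ := by simp [newtonStep]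
    _ ≤ ‖G x‖ / (1 - ‖1 - G' x‖) := hinv.norm_inverse_apply_le hlt _
    _ ≤ majorant L η t / (1 - L * t) :=
      div_le_div₀ ((norm_nonneg _).trans hGx) hGx hpos (by linarith)

include hL hη hLη hG hLip hG'x₀ hGx₀ in
lemma newton_iterate_majorized (k : ℕ) :
    ‖(newtonStep G G')^[k] x₀ - x₀‖ ≤ majorantSeq L η k ∧
      ‖G ((newtonStep G G')^[k] x₀)‖ ≤ majorant L η (majorantSeq L η k) := by
  induction k with
  | zero => simpa [majorantSeq, majorant] using hGx₀
  | succ k ih =>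
    set x := (newtonStep G G')^[k] x₀
    obtain ⟨hinv, hstep⟩ :=
      newtonStep_sub_le hL hLη hLip hG'x₀ (majorantSeq_mem_Ico hL hLη hη k) ih.1 ih.2
    rw [← majorantSeq_succ_sub] at hstep
    have hdist : ‖newtonStep G G' x - x₀‖ ≤ majorantSeq L η (k + 1) := by
      linarith [norm_sub_le_norm_sub_add_norm_sub (newtonStep G G' x) x x₀]
    rw [Function.iterate_succ_apply']
    refine ⟨hdist, ?_⟩
    calc ‖G (newtonStep G G' x)‖ ≤ L / 2 * ‖newtonStep G G' x - x‖ ^ 2 :=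
          norm_newtonStep_apply_le (convex_closedBall _ _) hG hLip
            (mem_closedBall_of_norm_sub_le_majorantSeq hL hLη hη ih.1)
            (mem_closedBall_of_norm_sub_le_majorantSeq hL hLη hη hdist) hinv
      _ ≤ L / 2 * (majorantSeq L η (k + 1) - majorantSeq L η k) ^ 2 := by gcongr
      _ = majorant L η (majorantSeq L η (k + 1)) := (majorant_majorantSeq_succ hL hLη hη k).symm

include hL hη hLη hG hLip hG'x₀ hGx₀ in
theorem exists_tendsto_newton_iterate :
    (∀ k, (G' ((newtonStep G G')^[k] x₀)).IsInvertible) ∧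
      ∃ xstar ∈ closedBall x₀ (majorantRoot L η), G xstar = 0 ∧
        Tendsto (fun k => (newtonStep G G')^[k] x₀) atTop (𝓝 xstar) := by
  set xs := fun k => (newtonStep G G')^[k] x₀
  have hmaj := newton_iterate_majorized hL hη hLη hG hLip hG'x₀ hGx₀
  have ht := majorantSeq_mem_Ico hL hLη hη
  have hstep k := newtonStep_sub_le hL hLη hLip hG'x₀ (ht k) (hmaj k).1 (hmaj k).2
  have hcauchy : CauchySeq xs := by
    refine cauchySeq_of_le_geometric (1 / 2) (majorantRoot L η) (by norm_num) fun k => ?_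
    rw [dist_comm, dist_eq_norm]
    calc ‖xs (k + 1) - xs k‖ ≤ majorantSeq L η (k + 1) - majorantSeq L η k := by
          simpa only [xs, Function.iterate_succ_apply', majorantSeq_succ_sub] using (hstep k).2
      _ ≤ majorantRoot L η - majorantSeq L η k := by linarith [(ht (k + 1)).2]
      _ ≤ majorantRoot L η / 2 ^ k := majorantRoot_sub_majorantSeq_le hL hLη hη k
      _ = majorantRoot L η * (1 / 2) ^ k := by rw [one_div_pow, div_eq_mul_inv, one_div]
  obtain ⟨xstar, hlim⟩ := cauchySeq_tendsto_of_complete hcauchy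
  have hxstar : xstar ∈ closedBall x₀ (majorantRoot L η) :=
    isClosed_closedBall.mem_of_tendsto hlim <| Eventually.of_forall fun k =>
      mem_closedBall_of_norm_sub_le_majorantSeq hL hLη hη (hmaj k).1
  refine ⟨fun k => (hstep k).1, xstar, hxstar, ?_, hlim⟩
  have hφ : Continuous (majorant L η) := by unfold majorant; fun_prop
  have hGφ : Tendsto (majorant L η ∘ majorantSeq L η) atTop (𝓝 0) :=
    majorant_majorantRoot hL hLη ▸ (hφ.tendsto _).comp (tendsto_majorantSeq hL hLη hη)
  exact tendsto_nhds_unique ((hG xstar hxstar).continuousAt.tendsto.comp hlim)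
    (squeeze_zero_norm (fun k => (hmaj k).2) hGφ)

end Normalized

end Kantorovich

open Kantorovich ContinuousLinearMap in
theorem kantorovich_existence_general
    (X Y : Type*) [NormedAddCommGroup X] [NormedSpace ℝ X] [CompleteSpace X]
    [NormedAddCommGroup Y] [NormedSpace ℝ Y] [CompleteSpace Y]
    (D₀ : Set X)
    (F : X → Y) (F' : X → X →L[ℝ] Y)
    (hF : ∀ x ∈ D₀, HasFDerivAt F (F' x) x)
    (x₀ : X)
    (A : X ≃L[ℝ] Y) (hA : (A : X →L[ℝ] Y) = F' x₀)
    (B η K : ℝ) (hB : 0 < B) (hη : 0 < η) (hK : 0 < K)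
    (hBbound : ‖(A.symm : Y →L[ℝ] X)‖ ≤ B)
    (hηbound : ‖A.symm (F x₀)‖ ≤ η)
    (hLip : ∀ x ∈ D₀, ∀ y ∈ D₀, ‖F' x - F' y‖ ≤ K * ‖x - y‖)
    (h : ℝ) (hdef : h = B * K * η) (hhalf : h ≤ 1 / 2)
    (tstar : ℝ) (htstar : tstar = (1 - Real.sqrt (1 - 2 * h)) / h * η)
    (hball : Metric.closedBall x₀ tstar ⊆ D₀) :
    ∃ xstar ∈ Metric.closedBall x₀ tstar, F xstar = 0 ∧
      ∃ xs : ℕ → X, xs 0 = x₀ ∧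
        (∀ k : ℕ, ∃ e : X ≃L[ℝ] Y, (e : X →L[ℝ] Y) = F' (xs k) ∧
          xs (k + 1) = xs k - e.symm (F (xs k))) ∧
        Filter.Tendsto xs Filter.atTop (nhds xstar) := by
  have hL : 0 < B * K := mul_pos hB hK
  have hLη : B * K * η ≤ 1 / 2 := hdef ▸ hhalf
  have htstar' : tstar = majorantRoot (B * K) η := by
    rw [htstar, hdef, majorantRoot]; field_simp
  subst htstar'
  have hG : ∀ x ∈ closedBall x₀ (majorantRoot (B * K) η),
      HasFDerivAt (fun x => A.symm (F x)) ((A.symm : Y →L[ℝ] X) ∘L F' x) x :=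
    fun x hx => (A.symm : Y →L[ℝ] X).hasFDerivAt.comp x (hF x (hball hx))
  have hLipG : ∀ x ∈ closedBall x₀ (majorantRoot (B * K) η),
      ∀ y ∈ closedBall x₀ (majorantRoot (B * K) η),
      ‖(A.symm : Y →L[ℝ] X) ∘L F' x - (A.symm : Y →L[ℝ] X) ∘L F' y‖ ≤ B * K * ‖x - y‖ :=
    fun x hx y hy =>
      calc _ ≤ ‖(A.symm : Y →L[ℝ] X)‖ * ‖F' x - F' y‖ := by
            rw [← comp_sub]; exact opNorm_comp_le _ _
        _ ≤ B * (K * ‖x - y‖) := by gcongr; exact hLip x (hball hx) y (hball hy)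
        _ = B * K * ‖x - y‖ := by ring
  have hG'x₀ : (A.symm : Y →L[ℝ] X) ∘L F' x₀ = 1 := by ext; simp [← hA]
  obtain ⟨hinv, xstar, hxstar, hzero, hlim⟩ :=
    exists_tendsto_newton_iterate hL hη hLη hG hLipG hG'x₀ hηbound
  rw [newtonStep_equiv_comp] at hinv hlim
  refine ⟨xstar, hxstar, A.symm.map_eq_zero_iff.1 hzero, _, rfl, fun k => ?_, hlim⟩
  obtain ⟨e, he⟩ := isInvertible_equiv_comp.1 (hinv k)
  exact ⟨e, he, by rw [Function.iterate_succ_apply', newtonStep, ← he, inverse_equiv]; rfl⟩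

/-- Kantorovich theorem, existence part: under the Kantorovich hypotheses, `F` has a zero `x*`
in the closed ball of center `x₀` and radius `t* = ((1 - √(1 - 2h))/h)·η`, and the Newton
sequence `x_{k+1} = x_k - F'(x_k)⁻¹ F(x_k)` starting from `x₀` is well defined (each `F'(x_k)`
is invertible) and converges to `x*`. -/
theorem kantorovich_existence
    (X Y : Type*) [NormedAddCommGroup X] [NormedSpace ℝ X] [CompleteSpace X]
    [NormedAddCommGroup Y] [NormedSpace ℝ Y] [CompleteSpace Y]
    (D₀ : Set X) (hD₀ : IsOpen D₀) (hconv : Convex ℝ D₀)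
    (F : X → Y) (F' : X → X →L[ℝ] Y)
    (hF : ∀ x ∈ D₀, HasFDerivAt F (F' x) x)
    (x₀ : X) (hx₀ : x₀ ∈ D₀)
    (A : X ≃L[ℝ] Y) (hA : (A : X →L[ℝ] Y) = F' x₀)
    (B η K : ℝ) (hB : 0 < B) (hη : 0 < η) (hK : 0 < K)
    (hBbound : ‖(A.symm : Y →L[ℝ] X)‖ ≤ B)
    (hηbound : ‖A.symm (F x₀)‖ ≤ η)
    (hLip : ∀ x ∈ D₀, ∀ y ∈ D₀, ‖F' x - F' y‖ ≤ K * ‖x - y‖)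
    (h : ℝ) (hdef : h = B * K * η) (hhalf : h ≤ 1 / 2)
    (tstar : ℝ) (htstar : tstar = (1 - Real.sqrt (1 - 2 * h)) / h * η)
    (hball : Metric.closedBall x₀ tstar ⊆ D₀) :
    ∃ xstar ∈ Metric.closedBall x₀ tstar, F xstar = 0 ∧
      ∃ xs : ℕ → X, xs 0 = x₀ ∧
        (∀ k : ℕ, ∃ e : X ≃L[ℝ] Y, (e : X →L[ℝ] Y) = F' (xs k) ∧
          xs (k + 1) = xs k - e.symm (F (xs k))) ∧
        Filter.Tendsto xs Filter.atTop (nhds xstar) :=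
  kantorovich_existence_general X Y D₀ F F' hF x₀ A hA B η K hB hη hK hBbound hηbound hLip h hdef
    hhalf tstar htstar hball
end
end
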